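/- For n ≥ 2, TC(F(ℂ, n)) ≤ 2n − 2. -/

import Mathlib

open unitInterval ContinuousMap

/-- `HasMotionCover X k`: `X × X` admits a cover by `k` open subsets, on each of which
the path fibration `π : PX → X × X`, `π γ = (γ 0, γ 1)`, admits a continuous section. -/
def HasMotionCover (X : Type*) [TopologicalSpace X] (k : ℕ) : Prop :=
  ∃ U : Fin k → Set (X × X),
    (∀ i, IsOpen (U i)) ∧ (⋃ i, U i) = Set.univ ∧
    ∀ i, ∃ s : C((U i : Set (X × X)), C(I, X)),
      ∀ p : U i, ((s p) 0, (s p) 1) = (p : X × X)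

/-- The topological complexity of `X`: the minimal number `k` such that `X × X` admits a
cover by `k` open subsets over each of which the path fibration admits a continuous
section; `⊤` (infinity) if no such `k` exists. -/
noncomputable def topologicalComplexity (X : Type*) [TopologicalSpace X] : ℕ∞ :=
  sInf ((↑) '' {k : ℕ | HasMotionCover X k})
/-- The configuration space `F(ℝᵐ, n)` of `n` distinct ordered points in Euclidean `m`-space. -/
noncomputable def Conf (m n : ℕ) : Type :=
  {x : Fin n → EuclideanSpace ℝ (Fin m) // Function.Injective x}

noncomputable instance (m n : ℕ) : TopologicalSpace (Conf m n) :=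
  inferInstanceAs (TopologicalSpace {x : Fin n → EuclideanSpace ℝ (Fin m) // Function.Injective x})

/-- The configuration space `F(ℂ, n)` of `n` distinct ordered points in the plane `ℂ`. -/
def ConfC (n : ℕ) : Type :=
  {x : Fin n → ℂ // Function.Injective x}

instance (n : ℕ) : TopologicalSpace (ConfC n) :=
  inferInstanceAs (TopologicalSpace {x : Fin n → ℂ // Function.Injective x})

/-!
Write `X` for the configurations with `x 0 = 0` and `x 1 = 1`; then `F(ℂ, n) ≅ ℂˣ × ℂ × X`.
Thickened Fox–Neuwirth cells (points grouped into columns of nearly equal real part, ordered by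
imaginary part inside a column) cover `X`. Cells with the same number `c ∈ [2, n]` of columns are
disjoint, and each cell contracts in `X` to a fixed configuration, so `X` is covered by `n - 1`
open sets that are contractible in `X`, whence `TC X ≤ 2 (n - 1) - 1`. Ostrand's
partition-of-unity argument gives both this bound and `TC (Y × Z) ≤ TC Y + TC Z - 1`; with
`TC ℂ = 1` and `TC ℂˣ ≤ 2` this yields `TC F(ℂ, n) ≤ 2 n - 2`.
-/

section PathSection

open Function

variable {A A' X Y : Type*} [TopologicalSpace A] [TopologicalSpace A'] [TopologicalSpace X]
  [TopologicalSpace Y]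

/-- This covers both motion planners over `S ⊆ X × X` (`a, b = fst, snd`) and contractions of
`S ⊆ X` to a point (`a = id`, `b` constant). -/
def HasPathSection (a b : A → X) (S : Set A) : Prop :=
  ∃ γ : ∀ p : S, Path (a p) (b p), Continuous ↿γ

namespace HasPathSection

variable {a b c : A → X} {S T : Set A}

theorem mono (h : HasPathSection a b T) (hST : S ⊆ T) : HasPathSection a b S := by
  obtain ⟨γ, hγ⟩ := h
  exact ⟨fun p => γ ⟨p, hST p.2⟩, hγ.comp ((continuous_inclusion hST).prodMap continuous_id)⟩

theorem symm (h : HasPathSection a b S) : HasPathSection b a S := by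
  obtain ⟨γ, hγ⟩ := h
  exact ⟨fun p => (γ p).symm, Path.symm_continuous_family _ hγ⟩

theorem trans (h₁ : HasPathSection a b S) (h₂ : HasPathSection b c S) :
    HasPathSection a c S := by
  obtain ⟨γ₁, hγ₁⟩ := h₁
  obtain ⟨γ₂, hγ₂⟩ := h₂
  exact ⟨fun p => (γ₁ p).trans (γ₂ p), Path.trans_continuous_family _ hγ₁ _ hγ₂⟩

theorem map (h : HasPathSection a b S) {f : X → Y} (hf : Continuous f) :
    HasPathSection (f ∘ a) (f ∘ b) S := by
  obtain ⟨γ, hγ⟩ := h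
  exact ⟨fun p => (γ p).map hf, hf.comp hγ⟩

theorem prod {a₂ b₂ : A → Y} (h₁ : HasPathSection a b S) (h₂ : HasPathSection a₂ b₂ S) :
    HasPathSection (fun p => (a p, a₂ p)) (fun p => (b p, b₂ p)) S := by
  obtain ⟨γ₁, hγ₁⟩ := h₁
  obtain ⟨γ₂, hγ₂⟩ := h₂
  exact ⟨fun p => (γ₁ p).prod (γ₂ p), hγ₁.prodMk hγ₂⟩

theorem preimage (h : HasPathSection a b S) {g : A' → A} (hg : Continuous g) :
    HasPathSection (a ∘ g) (b ∘ g) (g ⁻¹' S) := by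
  obtain ⟨γ, hγ⟩ := h
  exact ⟨fun p => γ ⟨g p, p.2⟩, hγ.comp (hg.restrictPreimage.prodMap continuous_id)⟩

theorem congr {a' b' : A → X} (h : HasPathSection a b S) (ha : ∀ p ∈ S, a p = a' p)
    (hb : ∀ p ∈ S, b p = b' p) : HasPathSection a' b' S := by
  obtain ⟨γ, hγ⟩ := h
  exact ⟨fun p => (γ p).cast (ha p p.2).symm (hb p p.2).symm, hγ⟩

theorem iUnion {κ : Type*} {V : κ → Set A} (hV : ∀ i, IsOpen (V i))
    (hd : Pairwise (Disjoint on V)) (h : ∀ i, HasPathSection a b (V i)) :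
    HasPathSection a b (⋃ i, V i) := by
  choose γ hγ using h
  let W : κ → Set (⋃ i, V i) := fun i => Subtype.val ⁻¹' V i
  let φ : ∀ i, C(W i, C(I, X)) := fun i =>
    (ContinuousMap.curry ⟨↿(γ i), hγ i⟩).comp ⟨fun q => ⟨q.1.1, q.2⟩, by fun_prop⟩
  have hagree : ∀ i j (p : ⋃ i, V i) (hi : p ∈ W i) (hj : p ∈ W j),
      φ i ⟨p, hi⟩ = φ j ⟨p, hj⟩ := by
    intro i j p hi hj
    obtain rfl : i = j := by_contra fun hij => (hd hij).ne_of_mem hi hj rfl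
    rfl
  have hnhds : ∀ p : ⋃ i, V i, ∃ i, W i ∈ nhds p := fun p =>
    (Set.mem_iUnion.mp p.2).imp fun i hi => ((hV i).preimage continuous_subtype_val).mem_nhds hi
  let Γ := ContinuousMap.liftCover W φ hagree hnhds
  have hΓ : ∀ p i (hi : p ∈ W i), Γ p = γ i ⟨p, hi⟩ := fun p i hi =>
    ContinuousMap.liftCover_coe (⟨p, hi⟩ : W i)
  refine ⟨fun p => ⟨Γ p, ?_, ?_⟩, Γ.continuous_uncurry_of_continuous⟩ <;>
    obtain ⟨i, hi⟩ := Set.mem_iUnion.mp p.2 <;> simp [hΓ p i hi]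

end HasPathSection

end PathSection

section MotionCover

variable {X Y : Type*} [TopologicalSpace X] [TopologicalSpace Y]

theorem hasMotionCover_iff {k : ℕ} :
    HasMotionCover X k ↔ ∃ U : Fin k → Set (X × X), (∀ i, IsOpen (U i)) ∧
      (⋃ i, U i) = Set.univ ∧ ∀ i, HasPathSection Prod.fst Prod.snd (U i) := by
  refine exists_congr fun U => and_congr_right' <| and_congr_right' <| forall_congr' fun i => ?_
  constructor
  · rintro ⟨s, hs⟩
    refine ⟨fun p => ⟨s p, congrArg Prod.fst (hs p), congrArg Prod.snd (hs p)⟩,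
      s.continuous_uncurry_of_continuous⟩
  · rintro ⟨γ, hγ⟩
    exact ⟨ContinuousMap.curry ⟨↿γ, hγ⟩, fun p => Prod.ext (γ p).source (γ p).target⟩

theorem topologicalComplexity_le_of_hasMotionCover {k : ℕ} (h : HasMotionCover X k) :
    topologicalComplexity X ≤ k :=
  sInf_le ⟨k, h, rfl⟩

theorem HasMotionCover.of_homeomorph {k : ℕ} (e : X ≃ₜ Y) (h : HasMotionCover X k) :
    HasMotionCover Y k := by
  obtain ⟨U, hU, hcov, hsec⟩ := hasMotionCover_iff.mp h
  have he : Continuous (Prod.map e.symm e.symm) := by fun_prop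
  refine hasMotionCover_iff.mpr ⟨fun i => Prod.map e.symm e.symm ⁻¹' U i,
    fun i => (hU i).preimage he, by simp [← Set.preimage_iUnion, hcov], fun i => ?_⟩
  exact (((hsec i).preimage he).map e.continuous).congr (by simp) (by simp)

theorem hasMotionCover_one {E : Type*} [AddCommGroup E] [Module ℝ E] [TopologicalSpace E]
    [IsTopologicalAddGroup E] [ContinuousSMul ℝ E] : HasMotionCover E 1 := by
  refine hasMotionCover_iff.mpr ⟨fun _ => Set.univ, fun _ => isOpen_univ, Set.iUnion_const _,
    fun _ => ⟨fun p => ⟨⟨fun t => p.1.1 + (t : ℝ) • (p.1.2 - p.1.1), by fun_prop⟩, by simp,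
      by simp⟩, ?_⟩⟩
  exact (show Continuous fun q : ↥(Set.univ : Set (E × E)) × I =>
    q.1.1.1 + (q.2 : ℝ) • (q.1.1.2 - q.1.1.1) by fun_prop)

end MotionCover

section DisjointFamilies

open Function

variable {Z : Type*}

def HasDisjointFamilies (Z : Type*) [TopologicalSpace Z] (Q : Set Z → Prop) (N m : ℕ) : Prop :=
  ∃ V : Fin N → Set (Set Z), (∀ r, ∀ A ∈ V r, IsOpen A ∧ Q A) ∧
    (∀ r, (V r).PairwiseDisjoint id) ∧ ∀ z, ∃ R : Finset (Fin N), m ≤ R.card ∧ ∀ r ∈ R, z ∈ ⋃₀ V r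

theorem exists_injective_fin_mem_Ioo (N : ℕ) {ε : ℝ} (hε : 0 < ε) :
    ∃ θ : Fin N → ℝ, Injective θ ∧ ∀ r, θ r ∈ Set.Ioo 0 ε := by
  refine ⟨fun r => (r + 1) / (N + 1) * ε, fun r r' h => ?_, fun r => ⟨by positivity, ?_⟩⟩
  · rw [mul_left_inj' hε.ne', div_left_inj' (by positivity), add_left_inj] at h
    exact Fin.ext (by exact_mod_cast h)
  · have hr : (r : ℝ) + 1 < N + 1 := by exact_mod_cast Nat.succ_lt_succ r.isLt
    exact mul_lt_of_lt_one_left hε ((div_lt_one (by positivity)).mpr hr)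

theorem le_card_filter_forall_ne {ι α : Type*} [Fintype ι] [DecidableEq α] {N : ℕ}
    {v : ι → α} {θ : Fin N → α} (hθ : Injective θ) {i₁ : ι} (hi₁ : ∀ r, v i₁ ≠ θ r) :
    N + 1 - Fintype.card ι ≤ (Finset.univ.filter fun r => ∀ i, v i ≠ θ r).card := by
  classical
  have hbad : (Finset.univ.filter fun r => ¬∀ i, v i ≠ θ r).card ≤
      (Finset.univ.erase i₁).card := by
    refine Finset.card_le_card_of_forall_subsingleton (fun r i => v i = θ r) (fun r hr => ?_)
      fun i _ r hr r' hr' => hθ (hr.2.symm.trans hr'.2)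
    obtain ⟨i, hi⟩ := not_forall_not.mp (Finset.mem_filter.mp hr).2
    exact ⟨i, Finset.mem_erase.mpr ⟨fun h => hi₁ r (h ▸ hi), Finset.mem_univ _⟩, hi⟩
  have hsplit := Finset.card_filter_add_card_filter_not (s := Finset.univ)
    fun r => ∀ i, v i ≠ θ r
  rw [Finset.card_erase_of_mem (Finset.mem_univ _), Finset.card_univ] at hbad
  rw [Finset.card_univ, Fintype.card_fin] at hsplit
  have hk : 0 < Fintype.card ι := Fintype.card_pos_iff.mpr ⟨i₁⟩
  omega

section ThresholdCell

variable {ι : Type*}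

def thresholdCell (f : ι → Z → ℝ) (t : ℝ) (S : Finset ι) : Set Z :=
  (⋂ i ∈ S, {z | t < f i z}) ∩ ⋂ (i) (_ : i ∉ S), {z | f i z < t}

variable {f : ι → Z → ℝ} {t : ℝ} {S S' : Finset ι} {z : Z}

theorem mem_thresholdCell :
    z ∈ thresholdCell f t S ↔ (∀ i ∈ S, t < f i z) ∧ ∀ i ∉ S, f i z < t := by
  simp [thresholdCell]

theorem isOpen_thresholdCell [TopologicalSpace Z] [Finite ι] (hf : ∀ i, Continuous (f i)) :
    IsOpen (thresholdCell f t S) :=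
  (isOpen_biInter_finset fun i _ => isOpen_lt continuous_const (hf i)).inter
    (isOpen_iInter_of_finite fun i => isOpen_iInter_of_finite fun _ =>
      isOpen_lt (hf i) continuous_const)

theorem disjoint_thresholdCell (h : S ≠ S') :
    Disjoint (thresholdCell f t S) (thresholdCell f t S') := by
  have key : ∀ {S S' : Finset ι} {i}, i ∈ S → i ∉ S' →
      Disjoint (thresholdCell f t S) (thresholdCell f t S') := fun hi hi' =>
    Set.disjoint_left.mpr fun z hz hz' =>
      ((mem_thresholdCell.mp hz).1 _ hi).not_gt ((mem_thresholdCell.mp hz').2 _ hi')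
  obtain ⟨i, hi⟩ : ∃ i, ¬(i ∈ S ↔ i ∈ S') := by
    by_contra! h'
    exact h (Finset.ext h')
  by_cases hS : i ∈ S
  · exact key hS (by tauto)
  · exact (key (by tauto) hS).symm

theorem mem_thresholdCell_filter [Fintype ι] (h : ∀ i, f i z ≠ t) :
    z ∈ thresholdCell f t (Finset.univ.filter fun i => t < f i z) := by
  refine mem_thresholdCell.mpr ⟨fun i hi => (Finset.mem_filter.mp hi).2, fun i hi => ?_⟩
  exact lt_of_le_of_ne (not_lt.mp fun h' => hi (Finset.mem_filter.mpr ⟨Finset.mem_univ _, h'⟩))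
    (h i)

end ThresholdCell

/- Ostrand's trick, with a partition of unity `f` subordinate to the `k` sets `U i` and `N`
distinct thresholds `θ r < 1 / (k + 1)`: the `r`-th family consists of the cells where `f i`
exceeds `θ r` exactly for `i ∈ S`. Some `f i₁ z > 1 / (k + 1)`, and each of the other `k - 1`
values `f i z` spoils at most one threshold. -/
theorem hasDisjointFamilies_of_iUnion_eq_univ [TopologicalSpace Z] [NormalSpace Z] {ι : Type*}
    [Fintype ι] {Q : Set Z → Prop} (hQ : ∀ ⦃A B⦄, A ⊆ B → Q B → Q A) {U : ι → Set Z}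
    (hU : ∀ i, IsOpen (U i)) (hcov : (⋃ i, U i) = Set.univ) (hQU : ∀ i, Q (U i)) (N : ℕ) :
    HasDisjointFamilies Z Q N (N + 1 - Fintype.card ι) := by
  classical
  obtain ⟨f, hf⟩ := PartitionOfUnity.exists_isSubordinate_of_locallyFinite isClosed_univ U hU
    (locallyFinite_of_finite U) hcov.ge
  obtain ⟨θ, hθ_inj, hθ⟩ := exists_injective_fin_mem_Ioo N
    (ε := 1 / (Fintype.card ι + 1)) (by positivity)
  refine ⟨fun r => Set.range fun S : {S : Finset ι // S.Nonempty} =>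
    thresholdCell (fun i => f i) (θ r) S, ?_, fun r => ?_, fun z => ?_⟩
  · rintro r _ ⟨⟨S, i, hi⟩, rfl⟩
    refine ⟨isOpen_thresholdCell fun i => (f i).continuous, hQ (fun z hz => ?_) (hQU i)⟩
    have hfz : θ r < f i z := (mem_thresholdCell.mp hz).1 i hi
    exact hf i (subset_tsupport _ ((hθ r).1.trans hfz).ne')
  · exact Set.pairwiseDisjoint_range_iff.mpr fun S S' hne =>
      disjoint_thresholdCell fun h => hne (congrArg _ h)
  · obtain ⟨i₁, -, hi₁⟩ : ∃ i ∈ Finset.univ, 1 / ((Fintype.card ι : ℝ) + 1) < f i z := by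
      have hsum : ∑ i, f i z = 1 := by
        rw [← finsum_eq_sum_of_fintype]
        exact f.sum_eq_one (Set.mem_univ z)
      refine Finset.exists_lt_of_sum_lt ?_
      rw [hsum, Finset.sum_const, Finset.card_univ, nsmul_eq_mul, mul_one_div,
        div_lt_one (by positivity)]
      linarith
    refine ⟨_, le_card_filter_forall_ne (v := fun i => f i z) hθ_inj
      fun r => ((hθ r).2.trans hi₁).ne', fun r hr => ?_⟩
    refine Set.mem_sUnion.mpr ⟨_, ⟨⟨_, i₁, ?_⟩, rfl⟩,
      mem_thresholdCell_filter (Finset.mem_filter.mp hr).2⟩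
    simpa using (hθ r).2.trans hi₁

end DisjointFamilies

section ProductBound

variable {W X Y Z₁ Z₂ : Type*} [TopologicalSpace W] [TopologicalSpace X] [TopologicalSpace Y]
  [TopologicalSpace Z₁] [TopologicalSpace Z₂]

/- Two families of the same index meet over every pair `(z₁, z₂)` because `N < a + b`; on each
index the products of members are pairwise disjoint and their motion planners glue. -/
theorem hasMotionCover_of_hasDisjointFamilies {e : W × W → Z₁ × Z₂} (he : Continuous e)
    {Q₁ : Set Z₁ → Prop} {Q₂ : Set Z₂ → Prop} {N a b : ℕ} (h₁ : HasDisjointFamilies Z₁ Q₁ N a)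
    (h₂ : HasDisjointFamilies Z₂ Q₂ N b) (hN : N < a + b)
    (hQ : ∀ A B, Q₁ A → Q₂ B → HasPathSection Prod.fst Prod.snd (e ⁻¹' (A ×ˢ B))) :
    HasMotionCover W N := by
  obtain ⟨V₁, hV₁, hd₁, hm₁⟩ := h₁
  obtain ⟨V₂, hV₂, hd₂, hm₂⟩ := h₂
  have hopen : ∀ r (t : V₁ r × V₂ r), IsOpen (e ⁻¹' (t.1.1 ×ˢ t.2.1)) := fun r t =>
    ((hV₁ r _ t.1.2).1.prod (hV₂ r _ t.2.2).1).preimage he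
  refine hasMotionCover_iff.mpr ⟨fun r => ⋃ t : V₁ r × V₂ r, e ⁻¹' (t.1.1 ×ˢ t.2.1),
    fun r => isOpen_iUnion (hopen r), Set.eq_univ_of_forall fun z => ?_, fun r => ?_⟩
  · obtain ⟨R₁, hR₁, hzR₁⟩ := hm₁ (e z).1
    obtain ⟨R₂, hR₂, hzR₂⟩ := hm₂ (e z).2
    obtain ⟨r, hr⟩ := Finset.inter_nonempty_of_card_lt_card_add_card (Finset.subset_univ R₁)
      (Finset.subset_univ R₂) (by simp; omega)
    obtain ⟨A, hA, hzA⟩ := Set.mem_sUnion.mp (hzR₁ r (Finset.mem_inter.mp hr).1)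
    obtain ⟨B, hB, hzB⟩ := Set.mem_sUnion.mp (hzR₂ r (Finset.mem_inter.mp hr).2)
    exact Set.mem_iUnion.mpr ⟨r, Set.mem_iUnion.mpr ⟨(⟨A, hA⟩, ⟨B, hB⟩), hzA, hzB⟩⟩
  · refine HasPathSection.iUnion (hopen r) (fun t t' hne => ?_)
      fun t => hQ _ _ (hV₁ r _ t.1.2).2 (hV₂ r _ t.2.2).2
    refine Disjoint.preimage e (Set.disjoint_prod.mpr ?_)
    by_cases h : t.1 = t'.1
    · exact Or.inr (hd₂ r t.2.2 t'.2.2 fun h' => hne (Prod.ext h (Subtype.ext h')))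
    · exact Or.inl (hd₁ r t.1.2 t'.1.2 fun h' => h (Subtype.ext h'))

theorem HasMotionCover.prod [NormalSpace (X × X)] [NormalSpace (Y × Y)] {a b : ℕ}
    (hX : HasMotionCover X (a + 1)) (hY : HasMotionCover Y (b + 1)) :
    HasMotionCover (X × Y) (a + b + 1) := by
  obtain ⟨U, hU, hUcov, hUsec⟩ := hasMotionCover_iff.mp hX
  obtain ⟨V, hV, hVcov, hVsec⟩ := hasMotionCover_iff.mp hY
  have hFX := hasDisjointFamilies_of_iUnion_eq_univ (fun _ _ h hB => hB.mono h) hU hUcov hUsec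
    (a + b + 1)
  have hFY := hasDisjointFamilies_of_iUnion_eq_univ (fun _ _ h hB => hB.mono h) hV hVcov hVsec
    (a + b + 1)
  simp only [Fintype.card_fin] at hFX hFY
  have hg₁ : Continuous fun p : (X × Y) × (X × Y) => (p.1.1, p.2.1) := by fun_prop
  have hg₂ : Continuous fun p : (X × Y) × (X × Y) => (p.1.2, p.2.2) := by fun_prop
  refine hasMotionCover_of_hasDisjointFamilies (hg₁.prodMk hg₂) hFX hFY (by omega)
    fun A B hA hB => ?_
  exact ((hA.preimage hg₁).mono fun p hp => hp.1).prod ((hB.preimage hg₂).mono fun p hp => hp.2)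

/- The motion planner on `A ×ˢ B` runs the contraction of `A` and then the reversed contraction
of `B`: this is `TC X ≤ 2 cat X - 1`. -/
theorem hasMotionCover_of_contractible_cover [NormalSpace X] {ι : Type*} [Fintype ι]
    {U : ι → Set X} (hU : ∀ i, IsOpen (U i)) (hcov : (⋃ i, U i) = Set.univ) {x₀ : X}
    (hcontr : ∀ i, HasPathSection id (fun _ => x₀) (U i)) :
    HasMotionCover X (2 * Fintype.card ι - 1) := by
  obtain ⟨i₀, -⟩ := Set.mem_iUnion.mp (hcov.ge (Set.mem_univ x₀))
  have hk : 0 < Fintype.card ι := Fintype.card_pos_iff.mpr ⟨i₀⟩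
  have hF := hasDisjointFamilies_of_iUnion_eq_univ (fun _ _ h hB => hB.mono h) hU hcov hcontr
    (2 * Fintype.card ι - 1)
  refine hasMotionCover_of_hasDisjointFamilies continuous_id hF hF (by omega) fun A B hA hB => ?_
  exact ((hA.preimage continuous_fst).mono fun p hp => hp.1).trans
    ((hB.preimage continuous_snd).mono fun p hp => hp.2).symm

end ProductBound

section PuncturedPlane

open Complex

/- The planner follows a branch of `t ↦ p.1 * (p.2 / p.1) ^ t`, the branch cut being rotated by
`a`. -/
theorem hasPathSection_slitPlane (a : ℂ) :
    HasPathSection Prod.fst Prod.snd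
      {p : {z : ℂ // z ≠ 0} × {z : ℂ // z ≠ 0} | exp (-a) * (p.2 / p.1) ∈ slitPlane} := by
  set S := {p : {z : ℂ // z ≠ 0} × {z : ℂ // z ≠ 0} | exp (-a) * (p.2 / p.1) ∈ slitPlane}
  let L : S → ℂ := fun p => a + log (exp (-a) * (p.1.2 / p.1.1))
  have hL : Continuous L :=
    continuous_const.add <| Continuous.clog (by fun_prop (disch := exact fun p => p.1.1.2))
      fun p => p.2
  refine ⟨fun p => ⟨⟨fun t => ⟨p.1.1 * exp ((t : ℝ) * L p), mul_ne_zero p.1.1.2 (exp_ne_zero _)⟩,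
    by fun_prop⟩, ?_, ?_⟩, ?_⟩
  · simp
  · have h₁ := p.1.1.2
    ext
    simp only [L, Set.Icc.coe_one, ofReal_one, one_mul, exp_add, exp_log (slitPlane_ne_zero p.2)]
    field_simp
    rw [← exp_add, add_neg_cancel, exp_zero, one_mul]
  · exact Continuous.subtype_mk (by fun_prop) _

theorem hasMotionCover_ne_zero : HasMotionCover {z : ℂ // z ≠ 0} 2 := by
  let S : ℂ → Set ({z : ℂ // z ≠ 0} × {z : ℂ // z ≠ 0}) := fun a =>
    {p | exp (-a) * (p.2 / p.1) ∈ slitPlane}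
  refine hasMotionCover_iff.mpr ⟨![S 0, S (Real.pi * Complex.I)], fun i => ?_, ?_, fun i => ?_⟩
  · have hS : ∀ a, IsOpen (S a) := fun a =>
      isOpen_slitPlane.preimage (by fun_prop (disch := exact fun p => p.1.2))
    fin_cases i <;> exact hS _
  · refine Set.eq_univ_of_forall fun p => Set.mem_iUnion.mpr ?_
    rcases mem_slitPlane_or_neg_mem_slitPlane (div_ne_zero p.2.2 p.1.2) with h | h
    exacts [⟨0, by simpa [S] using h⟩, ⟨1, by simpa [S, exp_neg] using h⟩]
  · fin_cases i
    exacts [hasPathSection_slitPlane 0, hasPathSection_slitPlane (Real.pi * Complex.I)]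

end PuncturedPlane

section ColumnPieces

open Function Equiv

theorem eq_of_surjective_of_le_imp_le {α : Type*} {c : ℕ} {f g : α → Fin c}
    (hf : Surjective f) (hg : Surjective g) (hfg : ∀ a b, f a ≤ f b → g a ≤ g b) : f = g := by
  set φ := g ∘ surjInv hf
  have hφ : ∀ a, φ (f a) = g a := fun a =>
    le_antisymm (hfg _ _ (surjInv_eq hf _).le) (hfg _ _ (surjInv_eq hf _).ge)
  have hφ_surj : Surjective φ := fun v => (hg v).elim fun a ha => ⟨f a, (hφ a).trans ha⟩
  have hφ_mono : StrictMono φ :=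
    Monotone.strictMono_of_injective (fun v w h => hfg _ _ (by rwa [surjInv_eq hf, surjInv_eq hf]))
      (Finite.injective_iff_surjective.mpr hφ_surj)
  have : φ = id := (hφ_mono.range_inj strictMono_id).mp (by simp [hφ_surj.range_eq])
  exact funext fun a => by rw [← hφ a, this, id]

theorem exists_surjective_fin_le_iff {α β : Type*} [Fintype α] [LinearOrder β] (f : α → β) :
    ∃ G : α → Fin (Finset.univ.image f).card, Surjective G ∧ ∀ i j, G i ≤ G j ↔ f i ≤ f j := by
  let e := (Finset.univ.image f).orderIsoOfFin rfl
  refine ⟨fun i => e.symm ⟨f i, Finset.mem_image_of_mem f (Finset.mem_univ i)⟩, fun v => ?_,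
    fun i j => by simp⟩
  obtain ⟨i, -, hi⟩ := Finset.mem_image.mp (e v).2
  exact ⟨i, by simp [hi]⟩

variable {n c : ℕ}

/-- A thickened Fox–Neuwirth cell: `G i` is the column of the point `i`, and `ρ` enumerates the
points column by column, upwards within a column. -/
def columnPiece (ρ : Perm (Fin n)) (G : Fin n → Fin c) : Set (Fin n → ℂ) :=
  {x | (∀ p q, p < q → G (ρ p) = G (ρ q) → (x (ρ p)).im < (x (ρ q)).im) ∧
    ∀ i j k l, G i = G j → G k < G l → |(x i).re - (x j).re| < (x l).re - (x k).re}

variable {ρ ρ' : Perm (Fin n)} {G G' : Fin n → Fin c} {x : Fin n → ℂ}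

theorem isOpen_columnPiece (ρ : Perm (Fin n)) (G : Fin n → Fin c) :
    IsOpen (columnPiece ρ G) := by
  simp only [columnPiece, Set.ofPred_and, Set.ofPred_forall]
  refine IsOpen.inter (isOpen_iInter_of_finite fun p => isOpen_iInter_of_finite fun q => ?_)
    (isOpen_iInter_of_finite fun i => isOpen_iInter_of_finite fun j =>
      isOpen_iInter_of_finite fun k => isOpen_iInter_of_finite fun l => ?_) <;>
  exact isOpen_iInter_of_finite fun _ => isOpen_iInter_of_finite fun _ =>
    isOpen_lt (by fun_prop) (by fun_prop)

theorem re_lt_of_mem_columnPiece (hx : x ∈ columnPiece ρ G) {k l : Fin n} (h : G k < G l) :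
    (x k).re < (x l).re := by
  simpa using hx.2 k k k l rfl h

theorem abs_re_sub_lt_of_mem_columnPiece (hx : x ∈ columnPiece ρ G) {i j k l : Fin n}
    (hij : G i = G j) (hkl : G k ≠ G l) : |(x i).re - (x j).re| < |(x k).re - (x l).re| := by
  rcases hkl.lt_or_gt with h | h
  · exact (hx.2 i j k l hij h).trans_le (by rw [abs_sub_comm]; exact le_abs_self _)
  · exact (hx.2 i j l k hij h).trans_le (le_abs_self _)

theorem strictMono_of_mem_columnPiece (hx : x ∈ columnPiece ρ G) (hGρ : Monotone (G ∘ ρ)) :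
    StrictMono fun p => toLex (G (ρ p), (x (ρ p)).im) := fun p q hpq =>
  Prod.Lex.toLex_lt_toLex.mpr <| (hGρ hpq.le).lt_or_eq.imp id fun h => ⟨h, hx.1 p q hpq h⟩

theorem eq_sort_of_mem_columnPiece (hx : x ∈ columnPiece ρ G) (hGρ : Monotone (G ∘ ρ)) :
    ρ = Tuple.sort fun i => toLex (G i, (x i).im) :=
  Tuple.eq_sort_iff.mpr ⟨(strictMono_of_mem_columnPiece hx hGρ).monotone,
    fun _ _ hpq h => absurd h (strictMono_of_mem_columnPiece hx hGρ hpq).ne⟩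

theorem exists_mem_columnPiece (hx : Injective x) :
    ∃ (ρ : Perm (Fin n)) (G : Fin n → Fin (Finset.univ.image fun i => (x i).re).card),
      Surjective G ∧ Monotone (G ∘ ρ) ∧ x ∈ columnPiece ρ G := by
  obtain ⟨G, hG, hGle⟩ := exists_surjective_fin_le_iff fun i => (x i).re
  have hre_eq : ∀ {i j}, G i = G j → (x i).re = (x j).re := fun h =>
    le_antisymm ((hGle _ _).mp h.le) ((hGle _ _).mp h.ge)
  let key := fun i => toLex (G i, (x i).im)
  have hkey : Injective key := fun i j h => by
    obtain ⟨h₁, h₂⟩ := Prod.ext_iff.mp (toLex.injective h)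
    exact hx (Complex.ext (hre_eq h₁) h₂)
  have hmono := Tuple.monotone_sort key
  have hstrict := hmono.strictMono_of_injective (hkey.comp (Tuple.sort key).injective)
  refine ⟨Tuple.sort key, G, hG, fun p q h => Prod.Lex.monotone_fst _ _ (hmono h),
    fun p q hpq h => ((Prod.Lex.toLex_lt_toLex.mp (hstrict hpq)).resolve_left h.not_lt).2,
    fun i j k l hij hkl => ?_⟩
  rw [hre_eq hij, sub_self, abs_zero, sub_pos]
  exact lt_of_not_ge fun h => hkl.not_ge ((hGle l k).mpr h)

theorem columnPiece_refines_or (hx : x ∈ columnPiece ρ G) (hx' : x ∈ columnPiece ρ' G') :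
    (∀ i j, G i = G j → G' i = G' j) ∨ ∀ i j, G' i = G' j → G i = G j := by
  by_contra! h
  obtain ⟨⟨i, j, hij, hij'⟩, k, l, hkl', hkl⟩ := h
  exact (abs_re_sub_lt_of_mem_columnPiece hx hij hkl).not_gt
    (abs_re_sub_lt_of_mem_columnPiece hx' hkl' hij')

theorem le_imp_le_of_mem_columnPiece (hx : x ∈ columnPiece ρ G) (hx' : x ∈ columnPiece ρ' G')
    (href : ∀ i j, G i = G j → G' i = G' j) (i j : Fin n) (hij : G i ≤ G j) : G' i ≤ G' j := by
  rcases hij.lt_or_eq with h | h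
  · exact le_of_not_gt fun h' =>
      (re_lt_of_mem_columnPiece hx h).not_gt (re_lt_of_mem_columnPiece hx' h')
  · exact (href i j h).le

/- The columns of `x` are recovered from the spacing of the real parts, and then `ρ` is the
lexicographic order of (column, imaginary part). -/
theorem columnPiece_unique (hG : Surjective G) (hG' : Surjective G') (hGρ : Monotone (G ∘ ρ))
    (hGρ' : Monotone (G' ∘ ρ')) (hx : x ∈ columnPiece ρ G) (hx' : x ∈ columnPiece ρ' G') :
    ρ = ρ' ∧ G = G' := by
  obtain rfl : G = G' := by
    rcases columnPiece_refines_or hx hx' with href | href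
    · exact eq_of_surjective_of_le_imp_le hG hG' (le_imp_le_of_mem_columnPiece hx hx' href)
    · exact (eq_of_surjective_of_le_imp_le hG' hG (le_imp_le_of_mem_columnPiece hx' hx href)).symm
  exact ⟨(eq_sort_of_mem_columnPiece hx hGρ).trans (eq_sort_of_mem_columnPiece hx' hGρ').symm, rfl⟩

end ColumnPieces

section Contraction

open Function Equiv

variable {n c : ℕ}

theorem injective_lineMap_of_mem_columnPiece {ρ : Perm (Fin n)} {G : Fin n → Fin c}
    {x : Fin n → ℂ} (hx : x ∈ columnPiece ρ G) (hGρ : Monotone (G ∘ ρ)) {t : ℝ} (ht₀ : 0 ≤ t)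
    (ht₁ : t ≤ 1) :
    Injective fun i => ((1 - t : ℝ) : ℂ) * x i + (t : ℂ) * ((ρ.symm i : ℕ) : ℂ) := by
  suffices h : ∀ p q, p < q → ((1 - t : ℝ) : ℂ) * x (ρ p) + (t : ℂ) * (p : ℕ) ≠
      ((1 - t : ℝ) : ℂ) * x (ρ q) + (t : ℂ) * (q : ℕ) by
    intro i j hij
    by_contra hne
    rcases lt_or_gt_of_ne (ρ.symm.injective.ne hne) with hlt | hlt
    · exact h _ _ hlt (by simpa using hij)
    · exact h _ _ hlt (by simpa using hij.symm)
  intro p q hpq heq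
  have hre := congrArg Complex.re heq
  have him := congrArg Complex.im heq
  simp only [Complex.add_re, Complex.add_im, Complex.mul_re, Complex.mul_im, Complex.ofReal_re,
    Complex.ofReal_im, Complex.natCast_re, Complex.natCast_im] at hre him
  have hpqR : (p : ℝ) < q := by exact_mod_cast hpq
  rcases (hGρ hpq.le).lt_or_eq with hG | hG
  · have := re_lt_of_mem_columnPiece hx hG
    rcases ht₀.lt_or_eq with ht | rfl
    · nlinarith [mul_pos ht (sub_pos.mpr hpqR)]
    · linarith
  · have := hx.1 p q hpq hG
    rcases ht₁.lt_or_eq with ht | rfl <;> nlinarith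

/- Moving the point `i` from `a i` to `b i` along a half-ellipse whose height is proportional to
the displacement `b i - a i`: two points with equal displacement never meet. -/
theorem injective_arc {a b : Fin n → ℝ} (ha : Injective a) (hb : Injective b) {τ : ℝ}
    (hτ₀ : 0 ≤ τ) (hτ₁ : τ ≤ 1) :
    Injective fun i => (((1 - τ) * a i + τ * b i : ℝ) : ℂ) +
      Complex.I * ((τ * (1 - τ) * (b i - a i) : ℝ) : ℂ) := by
  intro i j hij
  have hre := congrArg Complex.re hij
  have him := congrArg Complex.im hij
  simp only [Complex.add_re, Complex.add_im, Complex.mul_re, Complex.mul_im, Complex.ofReal_re,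
    Complex.ofReal_im, Complex.I_re, Complex.I_im] at hre him
  rcases hτ₀.lt_or_eq with hτ₀ | rfl
  · rcases hτ₁.lt_or_eq with hτ₁ | rfl
    · have hd : b i - a i = b j - a j :=
        mul_left_cancel₀ (by nlinarith : τ * (1 - τ) ≠ 0) (by linarith)
      exact ha (by nlinarith)
    · exact hb (by simpa using hre)
  · exact ha (by simpa using hre)

end Contraction

section NormalizedConf

open Function Equiv

variable {m : ℕ}

/-- The space `X` in `F(ℂ, m + 2) ≃ X × S¹`. -/
def normalizedConf (m : ℕ) : Set (Fin (m + 2) → ℂ) := {x | Injective x ∧ x 0 = 0 ∧ x 1 = 1}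

def standardConf (m : ℕ) : normalizedConf m :=
  ⟨fun i => ((i : ℕ) : ℂ), fun i j h => Fin.ext (by simpa using h), by simp, by simp⟩

namespace ConfC

theorem sub_ne_zero (y : ConfC (m + 2)) : y.1 1 - y.1 0 ≠ 0 :=
  _root_.sub_ne_zero.mpr (y.2.ne (by simp))

noncomputable def normalize (y : ConfC (m + 2)) : normalizedConf m :=
  ⟨fun i => (y.1 i - y.1 0) / (y.1 1 - y.1 0),
    fun i j h => y.2 (by simpa [div_left_inj' y.sub_ne_zero] using h), by simp,
    div_self y.sub_ne_zero⟩

theorem continuous_normalize : Continuous (normalize (m := m)) := by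
  have hev : ∀ i, Continuous fun y : ConfC (m + 2) => y.1 i := fun i =>
    (continuous_apply i).comp continuous_subtype_val
  exact Continuous.subtype_mk (continuous_pi fun i =>
    ((hev i).sub (hev 0)).div ((hev 1).sub (hev 0)) sub_ne_zero) _

theorem normalize_of_mem {x : Fin (m + 2) → ℂ} (hx : x ∈ normalizedConf m) :
    normalize ⟨x, hx.1⟩ = ⟨x, hx⟩ := by
  ext i
  simp [normalize, hx.2.1, hx.2.2]

end ConfC

/- Each piece is contracted in `ConfC (m + 2)`, by a straight line onto the real axis in the
order `ρ` and then by `injective_arc` to the standard configuration; normalizing turns this into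
a contraction in `normalizedConf m`. -/
theorem hasPathSection_columnPiece {c : ℕ} {ρ : Perm (Fin (m + 2))} {G : Fin (m + 2) → Fin c}
    (hGρ : Monotone (G ∘ ρ)) :
    HasPathSection id (fun _ => standardConf m)
      (Subtype.val ⁻¹' columnPiece ρ G : Set (normalizedConf m)) := by
  set S : Set (normalizedConf m) := Subtype.val ⁻¹' columnPiece ρ G
  let a : Fin (m + 2) → ℝ := fun i => (ρ.symm i : ℕ)
  let b : Fin (m + 2) → ℝ := fun i => (i : ℕ)
  have ha : Injective a := fun i j h => ρ.symm.injective (Fin.ext (by simpa [a] using h))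
  have hb : Injective b := fun i j h => Fin.ext (by simpa [b] using h)
  let arc : I → ConfC (m + 2) := fun τ =>
    ⟨fun i => (((1 - τ) * a i + τ * b i : ℝ) : ℂ) +
        Complex.I * ((τ * (1 - τ) * (b i - a i) : ℝ) : ℂ), injective_arc ha hb τ.2.1 τ.2.2⟩
  have harc : Continuous arc := Continuous.subtype_mk (continuous_pi fun i => by fun_prop) _
  have h₁ : HasPathSection (fun x : normalizedConf m => (⟨x.1, x.2.1⟩ : ConfC (m + 2)))
      (fun _ => arc 0) S := by
    refine ⟨fun x => ⟨⟨fun t => ⟨fun i =>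
      ((1 - t : ℝ) : ℂ) * x.1.1 i + (t : ℂ) * ((ρ.symm i : ℕ) : ℂ),
      injective_lineMap_of_mem_columnPiece x.2 hGρ t.2.1 t.2.2⟩, ?_⟩, ?_, ?_⟩, ?_⟩
    · exact Continuous.subtype_mk (continuous_pi fun i => by fun_prop) _
    · exact Subtype.ext (funext fun i => by simp)
    · exact Subtype.ext (funext fun i => by simp [arc, a])
    · refine Continuous.subtype_mk (continuous_pi fun i => ?_) _
      have hx : Continuous fun q : S × I => q.1.1.1 i :=
        (continuous_apply i).comp
          (continuous_subtype_val.comp (continuous_subtype_val.comp continuous_fst))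
      fun_prop
  have h₂ : HasPathSection (fun _ => arc 0) (fun _ => arc 1) S :=
    ⟨fun _ => ⟨⟨arc, harc⟩, rfl, rfl⟩, harc.comp continuous_snd⟩
  have hend : ConfC.normalize (arc 1) = standardConf m :=
    Subtype.ext (funext fun i => by simp [ConfC.normalize, arc, b, standardConf])
  exact ((h₁.trans h₂).map ConfC.continuous_normalize).congr
    (fun x _ => ConfC.normalize_of_mem x.2) fun _ _ => hend

end NormalizedConf

namespace ConfC

noncomputable def homeomorphNormalized (m : ℕ) :
    ConfC (m + 2) ≃ₜ {z : ℂ // z ≠ 0} × ℂ × normalizedConf m where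
  toFun y := (⟨y.1 1 - y.1 0, y.sub_ne_zero⟩, y.1 0, normalize y)
  invFun z := ⟨fun i => z.2.1 + z.1.1 * z.2.2.1 i, fun i j h =>
    z.2.2.2.1 (mul_left_cancel₀ z.1.2 (add_left_cancel h))⟩
  left_inv y := Subtype.ext (funext fun i => by
    simp [normalize, mul_div_cancel₀ _ y.sub_ne_zero])
  right_inv := by
    rintro ⟨⟨l, hl⟩, c, x, hx, h0, h1⟩
    refine Prod.ext (Subtype.ext (by simp [h0, h1])) (Prod.ext (by simp [h0])
      (Subtype.ext (funext fun i => ?_)))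
    simp [normalize, h0, h1, hl]
  continuous_toFun := by
    have hev : ∀ i, Continuous fun y : ConfC (m + 2) => y.1 i := fun i =>
      (continuous_apply i).comp continuous_subtype_val
    exact (((hev 1).sub (hev 0)).subtype_mk _).prodMk ((hev 0).prodMk continuous_normalize)
  continuous_invFun := by
    refine Continuous.subtype_mk (continuous_pi fun i => ?_) _
    have hx : Continuous fun z : {z : ℂ // z ≠ 0} × ℂ × normalizedConf m => z.2.2.1 i :=
      (continuous_apply i).comp (continuous_subtype_val.comp (continuous_snd.comp continuous_snd))
    fun_prop

end ConfC

section CategoryBound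

open Function Equiv

theorem hasMotionCover_normalizedConf (m : ℕ) :
    HasMotionCover (normalizedConf m) (2 * m + 1) := by
  let U : Finset.Icc 2 (m + 2) → Set (normalizedConf m) := fun c =>
    ⋃ τ : {τ : Perm (Fin (m + 2)) × (Fin (m + 2) → Fin c) //
      Surjective τ.2 ∧ Monotone (τ.2 ∘ τ.1)}, Subtype.val ⁻¹' columnPiece τ.1.1 τ.1.2
  have hpiece : ∀ (c : ℕ) (ρ : Perm (Fin (m + 2))) (G : Fin (m + 2) → Fin c),
      IsOpen (Subtype.val ⁻¹' columnPiece ρ G : Set (normalizedConf m)) := fun c ρ G =>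
    (isOpen_columnPiece ρ G).preimage continuous_subtype_val
  have hU : ∀ c, IsOpen (U c) := fun c => isOpen_iUnion fun τ => hpiece _ _ _
  have hcov : (⋃ c, U c) = Set.univ := by
    refine Set.eq_univ_of_forall fun x => ?_
    obtain ⟨ρ, G, hG, hGρ, hx⟩ := exists_mem_columnPiece x.2.1
    have hc : (Finset.univ.image fun i => (x.1 i).re).card ∈ Finset.Icc 2 (m + 2) := by
      refine Finset.mem_Icc.mpr ⟨Finset.one_lt_card.mpr ⟨_, Finset.mem_image_of_mem _
        (Finset.mem_univ 0), _, Finset.mem_image_of_mem _ (Finset.mem_univ 1), ?_⟩, ?_⟩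
      · simp [x.2.2.1, x.2.2.2]
      · simpa using Finset.card_image_le (s := Finset.univ) (f := fun i => (x.1 i).re)
    exact Set.mem_iUnion.mpr ⟨⟨_, hc⟩, Set.mem_iUnion.mpr ⟨⟨(ρ, G), hG, hGρ⟩, hx⟩⟩
  have hcontr : ∀ c, HasPathSection id (fun _ => standardConf m) (U c) := fun c =>
    HasPathSection.iUnion (fun τ => hpiece _ _ _) (fun τ τ' hne => Set.disjoint_left.mpr
      fun x hx hx' => hne <| by
        obtain ⟨hρ, hG⟩ := columnPiece_unique τ.2.1 τ'.2.1 τ.2.2 τ'.2.2 hx hx'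
        exact Subtype.ext (Prod.ext hρ hG))
      fun τ => hasPathSection_columnPiece τ.2.2
  simpa [Nat.card_Icc, Nat.mul_succ] using hasMotionCover_of_contractible_cover hU hcov hcontr

end CategoryBound

/-- for `n ≥ 2`, `TC(F(ℂ, n)) ≤ 2n - 2`. -/
theorem tc_confC_le (n : ℕ) (hn : 2 ≤ n) :
    topologicalComplexity (ConfC n) ≤ 2 * n - 2 := by
  obtain ⟨m, rfl⟩ := Nat.exists_eq_add_of_le' hn
  have hY : HasMotionCover (ℂ × normalizedConf m) (0 + 2 * m + 1) :=
    hasMotionCover_one.prod (hasMotionCover_normalizedConf m)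
  have h := (hasMotionCover_ne_zero.prod hY).of_homeomorph (ConfC.homeomorphNormalized m).symm
  calc topologicalComplexity (ConfC (m + 2)) ≤ ((1 + (0 + 2 * m) + 1 : ℕ) : ℕ∞) :=
        topologicalComplexity_le_of_hasMotionCover h
    _ = 2 * (m + 2 : ℕ) - 2 := by norm_cast; omega
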